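/- arXiv:1609.03911 — 2 statements merged into one kernel-verified Lean document; each statement's English description precedes it below -/
import Mathlib

section
/- If $\rho = \sum_m p_m\, \sigma_m \otimes \tau_m$ is a separable state (with $p_m \geq 0$, $\sigma_m, \tau_m$ positive semidefinite), then its EVM $\chi$ satisfies the PPT criterion: both $\chi \geq 0$ and $\chi^{\Gamma_A} \geq 0$, where $\Gamma_A$ denotes partial transposition on the index pair associated with Alice's operators, i.e., $(\chi^{\Gamma_A})_{(i,j),(k,l)} = \chi_{(k,j),(i,l)}$. -/
open Matrix
open scoped Kronecker ComplexOrder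

/-!
Writing a positive semidefinite `ρ` as `Tᴴ T`, its EVM `Tr(ρ A_iᴴ A_k)` is the Gram matrix of the
vectorised matrices `A_i Tᴴ`, hence positive semidefinite. The bipartite EVM is the EVM for the
product family `A_i ⊗ B_j`, and for a product state `σ ⊗ τ` it factors as `χ_σ ⊗ χ_τ`. So the EVM
of a separable state is `∑ p_m χ_{σ_m} ⊗ χ_{τ_m}`, and its partial transpose
`∑ p_m χ_{σ_m}ᵀ ⊗ χ_{τ_m}` is again a nonnegative combination of Kronecker products of positive
semidefinite matrices.
-/

namespace Matrix

variable {R 𝕜 d d' ι κ m n : Type*}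

section PartialTranspose

variable [CommSemiring R]

def partialTransposeFst : Matrix (m × n) (m × n) R →ₗ[R] Matrix (m × n) (m × n) R where
  toFun M := of fun q r => M (r.1, q.2) (q.1, r.2)
  map_add' _ _ := rfl
  map_smul' _ _ := rfl

theorem partialTransposeFst_kronecker (X : Matrix m m R) (Y : Matrix n n R) :
    partialTransposeFst (X ⊗ₖ Y) = Xᵀ ⊗ₖ Y :=
  rfl

end PartialTranspose

def evm [Fintype d] [Mul R] [AddCommMonoid R] [Star R] (ρ : Matrix d d R)
    (A : ι → Matrix d d R) : Matrix ι ι R :=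
  of fun i k => (ρ * ((A i)ᴴ * A k)).trace

open scoped MatrixOrder in
theorem PosSemidef.evm [RCLike 𝕜] [Fintype d] [Finite ι] {ρ : Matrix d d 𝕜}
    (hρ : ρ.PosSemidef) (A : ι → Matrix d d 𝕜) : (ρ.evm A).PosSemidef := by
  classical
  obtain ⟨T, rfl⟩ := CStarAlgebra.nonneg_iff_eq_star_mul_self.mp hρ.nonneg
  let V : Matrix (d × d) ι 𝕜 := of fun x i => vec (A i * Tᴴ) x
  suffices (star T * T).evm A = Vᴴ * V from this ▸ posSemidef_conjTranspose_mul_self V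
  ext i k
  calc (star T * T * ((A i)ᴴ * A k)).trace = ((A i * Tᴴ)ᴴ * (A k * Tᴴ)).trace := by
        rw [star_eq_conjTranspose, Matrix.mul_assoc, trace_mul_comm]
        simp only [conjTranspose_mul, conjTranspose_conjTranspose, Matrix.mul_assoc]
    _ = star (vec (A i * Tᴴ)) ⬝ᵥ vec (A k * Tᴴ) := (star_vec_dotProduct_vec _ _).symm
    _ = (Vᴴ * V) i k := rfl

section CommSemiring

variable [CommSemiring R] [StarRing R] [Fintype d] [Fintype d']

theorem evm_sum (s : Finset m) (ρ : m → Matrix d d R) (A : ι → Matrix d d R) :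
    (∑ x ∈ s, ρ x).evm A = ∑ x ∈ s, (ρ x).evm A := by
  ext i k
  simp only [evm, of_apply, Matrix.sum_mul, trace_sum, Matrix.sum_apply]

theorem evm_smul (c : R) (ρ : Matrix d d R) (A : ι → Matrix d d R) :
    (c • ρ).evm A = c • ρ.evm A := by
  ext i k
  simp only [evm, of_apply, Matrix.smul_mul, trace_smul, Matrix.smul_apply]

theorem evm_kronecker (σ : Matrix d d R) (τ : Matrix d' d' R) (A : ι → Matrix d d R)
    (B : κ → Matrix d' d' R) :
    (σ ⊗ₖ τ).evm (fun q => A q.1 ⊗ₖ B q.2) = σ.evm A ⊗ₖ τ.evm B := by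
  ext ⟨i, j⟩ ⟨k, l⟩
  simp only [evm, of_apply, kroneckerMap_apply, conjTranspose_kronecker, ← mul_kronecker_mul,
    trace_kronecker]

end CommSemiring

end Matrix

theorem evm_separable_ppt_general
    {dA dB ι κ : Type*} [Fintype dA] [Fintype dB] [Fintype ι] [Fintype κ]
    (N : ℕ) (p : Fin N → ℝ) (hp : ∀ m, 0 ≤ p m)
    (σ : Fin N → Matrix dA dA ℂ) (hσ : ∀ m, (σ m).PosSemidef)
    (τ : Fin N → Matrix dB dB ℂ) (hτ : ∀ m, (τ m).PosSemidef)
    (ρ : Matrix (dA × dB) (dA × dB) ℂ)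
    (hρ : ρ = ∑ m : Fin N, (p m : ℂ) • (σ m ⊗ₖ τ m))
    (A : ι → Matrix dA dA ℂ) (B : κ → Matrix dB dB ℂ)
    (χ : Matrix (ι × κ) (ι × κ) ℂ)
    (hχ : ∀ i j k l, χ (i, j) (k, l) =
      (ρ * (((A i)ᴴ * A k) ⊗ₖ ((B j)ᴴ * B l))).trace) :
    χ.PosSemidef ∧
    (Matrix.of fun q r : ι × κ => χ (r.1, q.2) (q.1, r.2)).PosSemidef := by
  have hχ_evm : χ = ρ.evm fun q => A q.1 ⊗ₖ B q.2 := by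
    ext ⟨i, j⟩ ⟨k, l⟩
    rw [hχ, evm, of_apply, conjTranspose_kronecker, ← mul_kronecker_mul]
  have hχ_sep : χ = ∑ m, (p m : ℂ) • (σ m).evm A ⊗ₖ (τ m).evm B := by
    simp only [hχ_evm, hρ, evm_sum, evm_smul, evm_kronecker]
  have hp_nonneg (m : Fin N) : 0 ≤ (p m : ℂ) := Complex.zero_le_real.mpr (hp m)
  constructor
  · rw [hχ_sep]
    exact posSemidef_sum _ fun m _ =>
      (((hσ m).evm A).kronecker ((hτ m).evm B)).smul (hp_nonneg m)
  · change (partialTransposeFst χ).PosSemidef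
    simp only [hχ_sep, map_sum, map_smul, partialTransposeFst_kronecker]
    exact posSemidef_sum _ fun m _ =>
      (((hσ m).evm A).transpose.kronecker ((hτ m).evm B)).smul (hp_nonneg m)

/-- If `ρ = ∑ m, p m • (σ m ⊗ τ m)` is a separable state
(`p m ≥ 0`, `σ m`, `τ m` positive semidefinite), then its EVM `χ` satisfies the
PPT criterion: both `χ ≥ 0` and `χ^{Γ_A} ≥ 0`, where
`(χ^{Γ_A})_{(i,j),(k,l)} = χ_{(k,j),(i,l)}`. -/
theorem evm_separable_ppt
    {dA dB ι κ : Type*} [Fintype dA] [Fintype dB] [Fintype ι] [Fintype κ]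
    [DecidableEq dA] [DecidableEq dB]
    (N : ℕ) (p : Fin N → ℝ) (hp : ∀ m, 0 ≤ p m)
    (σ : Fin N → Matrix dA dA ℂ) (hσ : ∀ m, (σ m).PosSemidef)
    (τ : Fin N → Matrix dB dB ℂ) (hτ : ∀ m, (τ m).PosSemidef)
    (ρ : Matrix (dA × dB) (dA × dB) ℂ)
    (hρ : ρ = ∑ m : Fin N, (p m : ℂ) • (σ m ⊗ₖ τ m))
    (A : ι → Matrix dA dA ℂ) (B : κ → Matrix dB dB ℂ)
    (χ : Matrix (ι × κ) (ι × κ) ℂ)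
    (hχ : ∀ i j k l, χ (i, j) (k, l) =
      (ρ * (((A i)ᴴ * A k) ⊗ₖ ((B j)ᴴ * B l))).trace) :
    χ.PosSemidef ∧
    (Matrix.of fun q r : ι × κ => χ (r.1, q.2) (q.1, r.2)).PosSemidef :=
  evm_separable_ppt_general N p hp σ hσ τ hτ ρ hρ A B χ hχ
end

section
/- For a separable state $\rho$, the EVM $\chi$ decomposes as a finite sum $\chi = \sum_m \chi^A_m \otimes \chi^B_m$, where each $\chi^A_m$ is the $|I| \times |I|$ positive semidefinite matrix with entries $\mathrm{Tr}(\sigma_m A_i^\dagger A_k)$ and each $\chi^B_m$ is the $|J| \times |J|$ positive semidefinite matrix with entries $\mathrm{Tr}(\tau_m B_j^\dagger B_l)$ (up to the weights $p_m$); in particular the EVM of a separable state has a separable (tensor-sum) structure. -/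
open Matrix
open scoped Kronecker ComplexOrder

namespace Matrix

variable {R d e ι : Type*} [Fintype d] [Fintype e]

theorem trace_kronecker_mul_kronecker [CommSemiring R] (S X : Matrix d d R) (T Y : Matrix e e R) :
    ((S ⊗ₖ T) * (X ⊗ₖ Y)).trace = (S * X).trace * (T * Y).trace := by
  rw [← mul_kronecker_mul, trace_kronecker]

/-- This is the Gram matrix of `M` for the semi-inner product `⟪X, Y⟫ = Tr (Y S Xᴴ)` that `S`
induces on matrices. -/
theorem PosSemidef.trace_mul_conjTranspose_mul [RCLike R] [Finite ι] {S : Matrix d d R}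
    (hS : S.PosSemidef) (M : ι → Matrix d d R) :
    (of fun i k ↦ (S * ((M i)ᴴ * M k)).trace).PosSemidef := by
  let := S.toMatrixSeminormedAddCommGroup hS
  let := S.toMatrixInnerProductSpace hS
  convert posSemidef_gram R M using 1
  ext i k
  change (S * ((M i)ᴴ * M k)).trace = (M k * S * (M i)ᴴ).trace
  rw [trace_mul_cycle', mul_assoc]

end Matrix

theorem evm_separable_structure_general
    {dA dB ι κ : Type*} [Fintype dA] [Fintype dB] [Fintype ι] [Fintype κ]
    (N : ℕ) (p : Fin N → ℝ)
    (σ : Fin N → Matrix dA dA ℂ) (hσ : ∀ m, (σ m).PosSemidef)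
    (τ : Fin N → Matrix dB dB ℂ) (hτ : ∀ m, (τ m).PosSemidef)
    (ρ : Matrix (dA × dB) (dA × dB) ℂ)
    (hρ : ρ = ∑ m : Fin N, (p m : ℂ) • (σ m ⊗ₖ τ m))
    (A : ι → Matrix dA dA ℂ) (B : κ → Matrix dB dB ℂ)
    (χ : Matrix (ι × κ) (ι × κ) ℂ)
    (hχ : ∀ i j k l, χ (i, j) (k, l) =
      (ρ * (((A i)ᴴ * A k) ⊗ₖ ((B j)ᴴ * B l))).trace)
    (χA : Fin N → Matrix ι ι ℂ)
    (hχA : ∀ m i k, χA m i k = (σ m * ((A i)ᴴ * A k)).trace)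
    (χB : Fin N → Matrix κ κ ℂ)
    (hχB : ∀ m j l, χB m j l = (τ m * ((B j)ᴴ * B l)).trace) :
    χ = ∑ m : Fin N, (p m : ℂ) • (χA m ⊗ₖ χB m) ∧
    (∀ m, (χA m).PosSemidef) ∧ (∀ m, (χB m).PosSemidef) := by
  refine ⟨?_, fun m ↦ ?_, fun m ↦ ?_⟩
  · ext ⟨i, j⟩ ⟨k, l⟩
    simp only [hχ, hρ, Finset.sum_mul, trace_sum, Matrix.sum_apply, smul_mul, trace_smul,
      trace_kronecker_mul_kronecker, Matrix.smul_apply, kroneckerMap_apply, hχA, hχB]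
  · rw [show χA m = _ from ext (hχA m)]
    exact (hσ m).trace_mul_conjTranspose_mul A
  · rw [show χB m = _ from ext (hχB m)]
    exact (hτ m).trace_mul_conjTranspose_mul B

/-- For a separable state `ρ = ∑ m, p m • (σ m ⊗ τ m)`, the EVM
decomposes as `χ = ∑ m, p m • (χA m ⊗ χB m)` where
`(χA m) i k = Tr(σ m (A i)† (A k))` and `(χB m) j l = Tr(τ m (B j)† (B l))`
are positive semidefinite matrices; i.e. the EVM of a separable state has a
separable (tensor-sum) structure. -/
theorem evm_separable_structure
    {dA dB ι κ : Type*} [Fintype dA] [Fintype dB] [Fintype ι] [Fintype κ]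
    [DecidableEq dA] [DecidableEq dB]
    (N : ℕ) (p : Fin N → ℝ) (hp : ∀ m, 0 ≤ p m)
    (σ : Fin N → Matrix dA dA ℂ) (hσ : ∀ m, (σ m).PosSemidef)
    (τ : Fin N → Matrix dB dB ℂ) (hτ : ∀ m, (τ m).PosSemidef)
    (ρ : Matrix (dA × dB) (dA × dB) ℂ)
    (hρ : ρ = ∑ m : Fin N, (p m : ℂ) • (σ m ⊗ₖ τ m))
    (A : ι → Matrix dA dA ℂ) (B : κ → Matrix dB dB ℂ)
    (χ : Matrix (ι × κ) (ι × κ) ℂ)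
    (hχ : ∀ i j k l, χ (i, j) (k, l) =
      (ρ * (((A i)ᴴ * A k) ⊗ₖ ((B j)ᴴ * B l))).trace)
    (χA : Fin N → Matrix ι ι ℂ)
    (hχA : ∀ m i k, χA m i k = (σ m * ((A i)ᴴ * A k)).trace)
    (χB : Fin N → Matrix κ κ ℂ)
    (hχB : ∀ m j l, χB m j l = (τ m * ((B j)ᴴ * B l)).trace) :
    χ = ∑ m : Fin N, (p m : ℂ) • (χA m ⊗ₖ χB m) ∧
    (∀ m, (χA m).PosSemidef) ∧ (∀ m, (χB m).PosSemidef) :=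
  evm_separable_structure_general N p σ hσ τ hτ ρ hρ A B χ hχ χA hχA χB hχB
end
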